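/- Let K ∈ ℝ^{n×n} be symmetric positive definite, ψ ∈ ℝⁿ with ψ_v ∈ {−1,1}, K_ψ = diag(ψ)·K·diag(ψ), W = {w_1,…,w_N} distinct indices, y ∈ ℝⁿ, and γ > 0. Let y*_v = Σ_i c_i K_ψ(v,w_i) with c = ((K_ψ)_W + γN·I_N)⁻¹ y|_W be the RLS solution, where y|_W = (y(w_1),…,y(w_N))ᵀ. Then for every node v, |y(v) − y*_v| ≤ (P_{W,K}(v) + γN·√(K(v,v)) / (λ_min(K_W) + γN)) · ‖y‖_{K_ψ}, where P_{W,K}(v) = √(K(v,v) − k_vᵀ (K_W)⁻¹ k_v) with k_v = (K(v,w_i))_{i=1}^N is the power function, λ_min(K_W) is the smallest eigenvalue of K_W, and ‖y‖_{K_ψ} = √(yᵀ (K_ψ)⁻¹ y). -/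

import Mathlib

/-!
Conjugation by `D = diag ψ` (with `D² = 1`) turns `K_W` into `(K_ψ)_W = D_W K_W D_W`, which has
the same power function and the same lower eigenvalue bound, so it suffices to treat an arbitrary
positive definite `M`. The error `y(v) - y*_v` is `qᵀ y` for `q = e_v - ∑ m_i e_{w_i}` with
`m = (M_W + γN)⁻¹ k_v`, and Cauchy–Schwarz in the `M`-inner product gives
`|qᵀ y|² ≤ qᵀ M q · yᵀ M⁻¹ y`. Substituting `k_v = (M_W + γN) m` yields
`qᵀ M q = P(v)² + (γN)² mᵀ M_W⁻¹ m`, while `(λ_min + γN)² mᵀ M_W⁻¹ m ≤ k_vᵀ M_W⁻¹ k_v ≤ M(v,v)`.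
Finally `√(P² + ε²) ≤ P + ε`.
-/

open Matrix

lemma Real.abs_le_add_mul_sqrt_mul_sqrt {e a b r Y : ℝ} (ha : 0 ≤ a) (hb : 0 ≤ b) (hr : 0 ≤ r)
    (hY : 0 ≤ Y) (h : e ^ 2 ≤ (a + r ^ 2 * b) * Y) : |e| ≤ (√a + r * √b) * √Y := by
  have hab : a + r ^ 2 * b ≤ (√a + r * √b) ^ 2 := by
    nlinarith [Real.sq_sqrt ha, Real.sq_sqrt hb, Real.sqrt_nonneg a, Real.sqrt_nonneg b,
      mul_nonneg hr (Real.sqrt_nonneg b)]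
  calc |e| ≤ √((a + r ^ 2 * b) * Y) := Real.abs_le_sqrt h
    _ ≤ √((√a + r * √b) ^ 2 * Y) := by gcongr
    _ = (√a + r * √b) * √Y := by
      rw [Real.sqrt_mul (sq_nonneg _), Real.sqrt_sq (by positivity)]

namespace Matrix

variable {ι κ : Type*} [Fintype ι] [Fintype κ]

lemma IsHermitian.mulVec_dotProduct {B : Matrix ι ι ℝ} (hB : B.IsHermitian) (x y : ι → ℝ) :
    (B *ᵥ x) ⬝ᵥ y = x ⬝ᵥ (B *ᵥ y) := by
  rw [dotProduct_mulVec, ← mulVec_transpose, ← conjTranspose_eq_transpose_of_trivial, hB.eq,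
    dotProduct_comm]

lemma PosSemidef.sq_dotProduct_mulVec_le {M : Matrix ι ι ℝ} (hM : M.PosSemidef) (a b : ι → ℝ) :
    (a ⬝ᵥ (M *ᵥ b)) ^ 2 ≤ (a ⬝ᵥ (M *ᵥ a)) * (b ⬝ᵥ (M *ᵥ b)) := by
  let := M.toSeminormedAddCommGroup hM
  let := M.toInnerProductSpace hM
  have inner_eq : ∀ x y : ι → ℝ, inner ℝ x y = x ⬝ᵥ (M *ᵥ y) := fun x y => by
    change (M *ᵥ y) ⬝ᵥ star x = _
    simp [dotProduct_comm]
  simpa only [inner_eq, sq] using real_inner_mul_inner_self_le a b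

lemma dotProduct_mul_mul_of_mul_self {s : ι → ℝ} (hs : ∀ a, s a * s a = 1) (x y : ι → ℝ) :
    (s * x) ⬝ᵥ (s * y) = x ⬝ᵥ y := by
  simp only [dotProduct, Pi.mul_apply]
  exact Finset.sum_congr rfl fun a _ => by linear_combination (x a * y a) * hs a

variable [DecidableEq ι]

lemma PosDef.mulVec_inv_mulVec {M : Matrix ι ι ℝ} (hM : M.PosDef) (x : ι → ℝ) :
    M *ᵥ (M⁻¹ *ᵥ x) = x := by
  rw [mulVec_mulVec, mul_nonsing_inv _ ((isUnit_iff_isUnit_det M).mp hM.isUnit), one_mulVec]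

lemma PosDef.sq_dotProduct_le {M : Matrix ι ι ℝ} (hM : M.PosDef) (a b : ι → ℝ) :
    (a ⬝ᵥ b) ^ 2 ≤ (a ⬝ᵥ (M *ᵥ a)) * (b ⬝ᵥ (M⁻¹ *ᵥ b)) := by
  have h := hM.posSemidef.sq_dotProduct_mulVec_le a (M⁻¹ *ᵥ b)
  rwa [hM.mulVec_inv_mulVec, dotProduct_comm (M⁻¹ *ᵥ b)] at h

lemma PosDef.mul_dotProduct_inv_mulVec_le {B : Matrix ι ι ℝ} (hB : B.PosDef) {μ : ℝ}
    (hμ : 0 ≤ μ) (hμB : ∀ x, μ * (x ⬝ᵥ x) ≤ x ⬝ᵥ (B *ᵥ x)) (x : ι → ℝ) :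
    μ * (x ⬝ᵥ (B⁻¹ *ᵥ x)) ≤ x ⬝ᵥ x := by
  set u := B⁻¹ *ᵥ x
  have hBu : B *ᵥ u = x := hB.mulVec_inv_mulVec x
  have hu : μ * (u ⬝ᵥ u) ≤ u ⬝ᵥ x := hBu ▸ hμB u
  -- expand `‖x - μ u‖² ≥ 0` and use `μ ‖u‖² ≤ ⟪u, x⟫`
  have hsq : 0 ≤ (x - μ • u) ⬝ᵥ (x - μ • u) := Finset.sum_nonneg fun i _ => mul_self_nonneg _
  have hxu : x ⬝ᵥ u = u ⬝ᵥ x := dotProduct_comm x u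
  simp only [sub_dotProduct, dotProduct_sub, smul_dotProduct, dotProduct_smul, smul_eq_mul] at hsq
  nlinarith [mul_le_mul_of_nonneg_left hu hμ]

def errorWeights (v : ι) (w : κ → ι) (m : κ → ℝ) : ι → ℝ :=
  Pi.single v 1 - ∑ i, m i • Pi.single (w i) 1

lemma errorWeights_dotProduct (v : ι) (w : κ → ι) (m : κ → ℝ) (f : ι → ℝ) :
    errorWeights v w m ⬝ᵥ f = f v - ∑ i, m i * f (w i) := by
  simp [errorWeights, sub_dotProduct, sum_dotProduct]

lemma IsHermitian.errorWeights_dotProduct_mulVec {M : Matrix ι ι ℝ} (hM : M.IsHermitian) (v : ι)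
    (w : κ → ι) (m : κ → ℝ) :
    errorWeights v w m ⬝ᵥ (M *ᵥ errorWeights v w m) =
      M v v - 2 * (m ⬝ᵥ fun i => M v (w i)) + m ⬝ᵥ (M.submatrix w w *ᵥ m) := by
  have hsymm : ∀ a b, M a b = M b a := fun a b => by simpa using (hM.apply a b).symm
  have hrow : ∀ a, (M *ᵥ errorWeights v w m) a = M a v - ∑ j, m j * M a (w j) := fun a => by
    rw [mulVec, dotProduct_comm, errorWeights_dotProduct]
  have hquad : ∑ i, m i * ∑ j, m j * M (w i) (w j) = m ⬝ᵥ (M.submatrix w w *ᵥ m) := by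
    simp only [dotProduct, mulVec, submatrix_apply, Finset.mul_sum, mul_comm]
  simp_rw [errorWeights_dotProduct, hrow, hsymm (w _) v, mul_sub, Finset.sum_sub_distrib, ← hquad]
  simp only [dotProduct]
  ring

lemma PosDef.sq_sub_sum_le {M : Matrix ι ι ℝ} (hM : M.PosDef) (v : ι) (w : κ → ι)
    (m : κ → ℝ) (y : ι → ℝ) :
    (y v - ∑ i, m i * y (w i)) ^ 2 ≤
      (M v v - 2 * (m ⬝ᵥ fun i => M v (w i)) + m ⬝ᵥ (M.submatrix w w *ᵥ m)) *
        (y ⬝ᵥ (M⁻¹ *ᵥ y)) := by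
  rw [← errorWeights_dotProduct, ← hM.isHermitian.errorWeights_dotProduct_mulVec]
  exact hM.sq_dotProduct_le _ y

noncomputable def powerFunction [DecidableEq κ] (M : Matrix ι ι ℝ) (w : κ → ι) (v : ι) : ℝ :=
  √(M v v - (fun i => M v (w i)) ⬝ᵥ ((M.submatrix w w)⁻¹ *ᵥ fun i => M v (w i)))

lemma PosDef.dotProduct_submatrix_inv_mulVec_le [DecidableEq κ] {M : Matrix ι ι ℝ}
    (hM : M.PosDef) {w : κ → ι} (hw : Function.Injective w) (v : ι) :
    (fun i => M v (w i)) ⬝ᵥ ((M.submatrix w w)⁻¹ *ᵥ fun i => M v (w i)) ≤ M v v := by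
  set k : κ → ℝ := fun i => M v (w i)
  set p := (M.submatrix w w)⁻¹ *ᵥ k
  have hp : M.submatrix w w *ᵥ p = k := (hM.submatrix hw).mulVec_inv_mulVec k
  have h := hM.posSemidef.dotProduct_mulVec_nonneg (errorWeights v w p)
  rw [star_trivial, hM.isHermitian.errorWeights_dotProduct_mulVec, hp, dotProduct_comm p k] at h
  linarith

lemma PosDef.regularized_quadForm_le {B : Matrix ι ι ℝ} (hB : B.PosDef) {μ γ s : ℝ} (hμ : 0 ≤ μ)
    (hγ : 0 ≤ γ) (hμB : ∀ x, μ * (x ⬝ᵥ x) ≤ x ⬝ᵥ (B *ᵥ x)) {k m : ι → ℝ}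
    (hm : (B + γ • 1) *ᵥ m = k) (hs : k ⬝ᵥ (B⁻¹ *ᵥ k) ≤ s) :
    s - 2 * (m ⬝ᵥ k) + m ⬝ᵥ (B *ᵥ m) ≤ (s - k ⬝ᵥ (B⁻¹ *ᵥ k)) + (γ / (μ + γ)) ^ 2 * s := by
  have hk : k = B *ᵥ m + γ • m := by rw [← hm, add_mulVec, smul_mulVec, one_mulVec]
  set t := m ⬝ᵥ (B⁻¹ *ᵥ m)
  have hBinvB : B⁻¹ *ᵥ (B *ᵥ m) = m := by
    rw [mulVec_mulVec, nonsing_inv_mul _ ((isUnit_iff_isUnit_det B).mp hB.isUnit), one_mulVec]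
  have hmk : m ⬝ᵥ k = m ⬝ᵥ (B *ᵥ m) + γ * (m ⬝ᵥ m) := by
    rw [hk, dotProduct_add, dotProduct_smul, smul_eq_mul]
  have hkk : k ⬝ᵥ (B⁻¹ *ᵥ k) = m ⬝ᵥ (B *ᵥ m) + 2 * γ * (m ⬝ᵥ m) + γ ^ 2 * t := by
    rw [hk, mulVec_add, mulVec_smul, hBinvB]
    simp only [add_dotProduct, dotProduct_add, smul_dotProduct, dotProduct_smul, smul_eq_mul,
      hB.isHermitian.mulVec_dotProduct, hB.mulVec_inv_mulVec]
    ring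
  have ht : μ * t ≤ m ⬝ᵥ m := hB.mul_dotProduct_inv_mulVec_le hμ hμB m
  have hts : (μ + γ) ^ 2 * t ≤ s := by
    nlinarith [mul_le_mul_of_nonneg_left ht hμ, mul_le_mul_of_nonneg_left ht hγ, hμB m]
  have hγt : γ ^ 2 * t ≤ (γ / (μ + γ)) ^ 2 * s := by
    rcases hγ.eq_or_lt with rfl | hγ
    · simp
    calc γ ^ 2 * t = (γ / (μ + γ)) ^ 2 * ((μ + γ) ^ 2 * t) := by field_simp
      _ ≤ (γ / (μ + γ)) ^ 2 * s := by gcongr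
  linarith

theorem PosDef.abs_sub_regularizedInterpolant_le [DecidableEq κ] {M : Matrix ι ι ℝ}
    (hM : M.PosDef) {w : κ → ι} (hw : Function.Injective w) {μ γ : ℝ} (hμ : 0 ≤ μ) (hγ : 0 ≤ γ)
    (hμB : ∀ x, μ * (x ⬝ᵥ x) ≤ x ⬝ᵥ (M.submatrix w w *ᵥ x)) (y : ι → ℝ) (v : ι) :
    |y v - ∑ i, ((M.submatrix w w + γ • 1)⁻¹ *ᵥ fun j => y (w j)) i * M v (w i)| ≤
      (powerFunction M w v + γ * √(M v v) / (μ + γ)) * √(y ⬝ᵥ (M⁻¹ *ᵥ y)) := by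
  set B := M.submatrix w w
  set k : κ → ℝ := fun i => M v (w i)
  have hB : B.PosDef := hM.submatrix hw
  have hA : (B + γ • 1).PosDef := hB.add_posSemidef (PosSemidef.one.smul hγ)
  set m := (B + γ • 1)⁻¹ *ᵥ k
  have hsum : ∑ i, ((B + γ • 1)⁻¹ *ᵥ fun j => y (w j)) i * k i = ∑ i, m i * y (w i) := by
    change ((B + γ • 1)⁻¹ *ᵥ fun j => y (w j)) ⬝ᵥ k = m ⬝ᵥ fun j => y (w j)
    rw [hA.inv.isHermitian.mulVec_dotProduct, dotProduct_comm]
  have hpower := hM.dotProduct_submatrix_inv_mulVec_le hw v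
  have hy : 0 ≤ y ⬝ᵥ (M⁻¹ *ᵥ y) := by simpa using hM.inv.posSemidef.dotProduct_mulVec_nonneg y
  rw [hsum, powerFunction, mul_div_right_comm]
  refine Real.abs_le_add_mul_sqrt_mul_sqrt (by linarith) hM.diag_pos.le (by positivity) hy ?_
  refine (hM.sq_sub_sum_le v w m y).trans (mul_le_mul_of_nonneg_right ?_ hy)
  linarith [hB.regularized_quadForm_le hμ hγ hμB (hA.mulVec_inv_mulVec k) hpower]

lemma diagonal_mul_mul_diagonal_apply (d : ι → ℝ) (K : Matrix ι ι ℝ) (a b : ι) :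
    (diagonal d * K * diagonal d) a b = d a * K a b * d b := by
  rw [mul_diagonal, diagonal_mul]

lemma submatrix_diagonal_mul_mul_diagonal [DecidableEq κ] (d : ι → ℝ) (K : Matrix ι ι ℝ)
    (w : κ → ι) :
    (diagonal d * K * diagonal d).submatrix w w =
      diagonal (d ∘ w) * K.submatrix w w * diagonal (d ∘ w) := by
  ext i j
  simp only [submatrix_apply, diagonal_mul_mul_diagonal_apply, Function.comp_apply]

lemma dotProduct_diagonal_mul_mul_diagonal_mulVec (d : ι → ℝ) (K : Matrix ι ι ℝ) (x y : ι → ℝ) :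
    x ⬝ᵥ ((diagonal d * K * diagonal d) *ᵥ y) = (d * x) ⬝ᵥ (K *ᵥ (d * y)) := by
  have hx : x ᵥ* diagonal d = d * x := funext fun a => by simp [vecMul_diagonal, mul_comm]
  have hy : diagonal d *ᵥ y = d * y := funext (mulVec_diagonal d y)
  rw [← mulVec_mulVec, ← mulVec_mulVec, dotProduct_mulVec, hy, hx]

lemma PosDef.diagonal_mul_mul_diagonal {K : Matrix ι ι ℝ} (hK : K.PosDef) {d : ι → ℝ}
    (hd : ∀ a, d a ≠ 0) : (diagonal d * K * diagonal d).PosDef := by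
  have h := hK.conjTranspose_mul_mul_same (B := diagonal d) fun x y hxy => funext fun a => by
    simpa [mulVec_diagonal, hd a] using congrFun hxy a
  simpa using h

section SignVector

variable {s : ι → ℝ} (hs : ∀ a, s a * s a = 1)
include hs

lemma le_dotProduct_diagonal_mul_mul_diagonal_mulVec_of_mul_self {B : Matrix ι ι ℝ} {μ : ℝ}
    (hμB : ∀ x, μ * (x ⬝ᵥ x) ≤ x ⬝ᵥ (B *ᵥ x)) (x : ι → ℝ) :
    μ * (x ⬝ᵥ x) ≤ x ⬝ᵥ ((diagonal s * B * diagonal s) *ᵥ x) := by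
  rw [dotProduct_diagonal_mul_mul_diagonal_mulVec, ← dotProduct_mul_mul_of_mul_self hs x x]
  exact hμB _

lemma inv_diagonal_mul_mul_diagonal_of_mul_self (K : Matrix ι ι ℝ) :
    (diagonal s * K * diagonal s)⁻¹ = diagonal s * K⁻¹ * diagonal s := by
  have hss : diagonal s * diagonal s = 1 := by
    rw [diagonal_mul_diagonal, ← diagonal_one]
    exact congrArg diagonal (funext hs)
  rw [mul_inv_rev, mul_inv_rev, inv_eq_left_inv hss, mul_assoc]

lemma dotProduct_inv_diagonal_mul_mul_diagonal_mulVec_of_mul_self (K : Matrix ι ι ℝ)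
    (x : ι → ℝ) :
    (s * x) ⬝ᵥ ((diagonal s * K * diagonal s)⁻¹ *ᵥ (s * x)) = x ⬝ᵥ (K⁻¹ *ᵥ x) := by
  have hssx : s * (s * x) = x := funext fun a => by simp [← mul_assoc, hs a]
  rw [inv_diagonal_mul_mul_diagonal_of_mul_self hs, dotProduct_diagonal_mul_mul_diagonal_mulVec,
    hssx]

lemma diagonal_mul_mul_diagonal_apply_self_of_mul_self (K : Matrix ι ι ℝ) (a : ι) :
    (diagonal s * K * diagonal s) a a = K a a := by
  rw [diagonal_mul_mul_diagonal_apply]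
  linear_combination K a a * hs a

lemma powerFunction_diagonal_mul_mul_diagonal_of_mul_self [DecidableEq κ] (K : Matrix ι ι ℝ)
    (w : κ → ι) (v : ι) :
    powerFunction (diagonal s * K * diagonal s) w v = powerFunction K w v := by
  have hsw : ∀ i, (s ∘ w) i * (s ∘ w) i = 1 := fun i => hs (w i)
  have hrow : (fun i => (diagonal s * K * diagonal s) v (w i)) =
      (s ∘ w) * (s v • fun i => K v (w i)) := by
    ext i
    simp only [diagonal_mul_mul_diagonal_apply, Pi.mul_apply, Pi.smul_apply, smul_eq_mul,
      Function.comp_apply]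
    ring
  rw [powerFunction, powerFunction, diagonal_mul_mul_diagonal_apply_self_of_mul_self hs, hrow,
    submatrix_diagonal_mul_mul_diagonal,
    dotProduct_inv_diagonal_mul_mul_diagonal_mulVec_of_mul_self hsw, smul_dotProduct,
    mulVec_smul, dotProduct_smul, smul_eq_mul, smul_eq_mul, ← mul_assoc, hs, one_mul]

end SignVector

end Matrix

/-- Overall RLS approximation error bound for the binary-feature-augmented kernel
`K_ψ = diag(ψ) K diag(ψ)`: for the RLS solution `y*` with data `y` on the distinct nodes
`w i` and parameter `γ > 0`, every node `v` satisfies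
`|y(v) − y*_v| ≤ (P_{W,K}(v) + γN √(K(v,v)) / (λ_min(K_W) + γN)) · ‖y‖_{K_ψ}`,
where `P_{W,K}(v) = √(K(v,v) − k_vᵀ K_W⁻¹ k_v)` is the power function, `λ_min(K_W)` is the
smallest eigenvalue of `K_W` (characterized as the greatest `μ` with `μ‖x‖² ≤ xᵀ K_W x`)
and `‖y‖_{K_ψ} = √(yᵀ K_ψ⁻¹ y)`. -/
theorem stmt_19 {n N : ℕ} (K : Matrix (Fin n) (Fin n) ℝ) (hK : K.PosDef)
    (ψ : Fin n → ℝ) (hψ : ∀ v : Fin n, ψ v = 1 ∨ ψ v = -1)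
    (w : Fin N → Fin n) (hw : Function.Injective w)
    (y : Fin n → ℝ) (γ : ℝ) (hγ : 0 < γ)
    (KW : Matrix (Fin N) (Fin N) ℝ)
    (hKW : KW = Matrix.of fun i j : Fin N => K (w i) (w j))
    (lmin : ℝ)
    (hlmin : IsGreatest {μ : ℝ | ∀ x : Fin N → ℝ, μ * (x ⬝ᵥ x) ≤ x ⬝ᵥ (KW *ᵥ x)} lmin)
    (Kψ : Matrix (Fin n) (Fin n) ℝ)
    (hKψ : Kψ = Matrix.diagonal ψ * K * Matrix.diagonal ψ)
    (KψW : Matrix (Fin N) (Fin N) ℝ)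
    (hKψW : KψW = Matrix.of fun i j : Fin N => Kψ (w i) (w j))
    (c : Fin N → ℝ)
    (hc : c = (KψW + (γ * (N : ℝ)) • (1 : Matrix (Fin N) (Fin N) ℝ))⁻¹ *ᵥ fun i => y (w i)) :
    ∀ v : Fin n,
      |y v - ∑ i : Fin N, c i * Kψ v (w i)| ≤
        (Real.sqrt (K v v -
            (fun i : Fin N => K v (w i)) ⬝ᵥ (KW⁻¹ *ᵥ fun i : Fin N => K v (w i))) +
          γ * (N : ℝ) * Real.sqrt (K v v) / (lmin + γ * (N : ℝ))) *
          Real.sqrt (y ⬝ᵥ (Kψ⁻¹ *ᵥ y)) := by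
  intro v
  subst hKψ hKψW hKW hc
  have hψψ : ∀ a, ψ a * ψ a = 1 := fun a => by rcases hψ a with h | h <;> simp [h]
  have hlmin_nonneg : 0 ≤ lmin := hlmin.2 fun x => by
    have h := (hK.submatrix hw).posSemidef.dotProduct_mulVec_nonneg x
    rw [star_trivial] at h
    rw [zero_mul]
    exact h
  have hlow : ∀ x, lmin * (x ⬝ᵥ x) ≤
      x ⬝ᵥ ((diagonal ψ * K * diagonal ψ).submatrix w w *ᵥ x) := fun x => by
    rw [submatrix_diagonal_mul_mul_diagonal]
    exact le_dotProduct_diagonal_mul_mul_diagonal_mulVec_of_mul_self (fun i => hψψ (w i))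
      hlmin.1 x
  have hKψ := hK.diagonal_mul_mul_diagonal fun a => left_ne_zero_of_mul_eq_one (hψψ a)
  have h := hKψ.abs_sub_regularizedInterpolant_le hw hlmin_nonneg (γ := γ * N) (by positivity)
    hlow y v
  rwa [powerFunction_diagonal_mul_mul_diagonal_of_mul_self hψψ,
    diagonal_mul_mul_diagonal_apply_self_of_mul_self hψψ] at h
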